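/- arXiv:1505.02567 — 4 statements merged into one kernel-verified Lean document; each statement's English description precedes it below -/
import Mathlib

section
/- Discrete Poincaré inequality in 1D: let 0 = x₀ < x₁ < ... < x_{N+1} = L be a partition of (0,L), let v = (v₁,...,v_N) ∈ ℝ^N with the convention v₀ = v_{N+1} = 0, and let h_i = x_{i+1} - x_i. Then Σ_{i=1}^N h'_i v_i² ≤ L² Σ_{i=0}^N h_i ((v_{i+1}-v_i)/h_i)², where h'_i = (h_{i-1}+h_i)/2. -/
/-!
Writing `v i` as the telescoping sum of the increments `v (j + 1) - v j` over `j < i`,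
Cauchy–Schwarz with weights `h j = x (j + 1) - x j` gives `v i ^ 2 ≤ x i * E ≤ L * E`, where `E`
is the discrete energy on the right. The dual-mesh weights `h'_i` are nonnegative and telescope
to at most `L`, so summing the pointwise bound against them gives the factor `L ^ 2`.
-/

open Finset

/-- The squared discrete `H¹` seminorm of `v` on the first `n` cells of the mesh `x`. -/
noncomputable def discreteEnergy (x v : ℕ → ℝ) (n : ℕ) : ℝ :=
  ∑ j ∈ range n, (x (j + 1) - x j) * ((v (j + 1) - v j) / (x (j + 1) - x j)) ^ 2

section DiscreteEnergy

variable {x : ℕ → ℝ} {n : ℕ}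

lemma discreteEnergy_nonneg (hx : ∀ j < n, x j ≤ x (j + 1)) (v : ℕ → ℝ) :
    0 ≤ discreteEnergy x v n :=
  sum_nonneg fun j hj => mul_nonneg (sub_nonneg.mpr (hx j (mem_range.mp hj))) (sq_nonneg _)

lemma discreteEnergy_mono (hx : ∀ j < n, x j ≤ x (j + 1)) {m : ℕ} (hmn : m ≤ n)
    (v : ℕ → ℝ) : discreteEnergy x v m ≤ discreteEnergy x v n :=
  sum_le_sum_of_subset_of_nonneg (range_subset_range.mpr hmn) fun j hj _ =>
    mul_nonneg (sub_nonneg.mpr (hx j (mem_range.mp hj))) (sq_nonneg _)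

lemma sq_sub_le_mul_discreteEnergy (hx : ∀ j < n, x j < x (j + 1)) (v : ℕ → ℝ) :
    (v n - v 0) ^ 2 ≤ (x n - x 0) * discreteEnergy x v n := by
  rw [← sum_range_sub v, ← sum_range_sub x]
  refine sum_sq_le_sum_mul_sum_of_sq_le_mul _
    (fun j hj => sub_nonneg.mpr (hx j (mem_range.mp hj)).le)
    (fun j hj => mul_nonneg (sub_nonneg.mpr (hx j (mem_range.mp hj)).le) (sq_nonneg _))
    fun j hj => le_of_eq ?_
  have hh : x (j + 1) - x j ≠ 0 := (sub_pos.mpr (hx j (mem_range.mp hj))).ne'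
  field_simp

end DiscreteEnergy

lemma sum_Icc_dualMesh (x : ℕ → ℝ) (n : ℕ) :
    ∑ i ∈ Icc 1 n, ((x i - x (i - 1)) + (x (i + 1) - x i)) = (x n - x 0) + (x (n + 1) - x 1) := by
  induction n with
  | zero => simp
  | succ n ih =>
    rw [sum_Icc_succ_top (by omega), ih, Nat.add_sub_cancel]
    ring

theorem discrete_poincare_1d_general (N : ℕ) (L : ℝ) (x : ℕ → ℝ)
    (hx0 : x 0 = 0) (hxL : x (N + 1) = L)
    (hmono : ∀ i ≤ N, x i < x (i + 1))
    (v : ℕ → ℝ) (hv0 : v 0 = 0) :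
    ∑ i ∈ Finset.Icc 1 N, ((x i - x (i - 1)) + (x (i + 1) - x i)) / 2 * (v i) ^ 2
      ≤ L ^ 2 * ∑ i ∈ Finset.range (N + 1),
          (x (i + 1) - x i) * ((v (i + 1) - v i) / (x (i + 1) - x i)) ^ 2 := by
  have hstep : ∀ j < N + 1, x j < x (j + 1) := fun j hj => hmono j (Nat.lt_succ_iff.mp hj)
  have hxmono : MonotoneOn x (Set.Iic (N + 1)) := (strictMonoOn_Iic_of_lt_succ hstep).monotoneOn
  have hx_le_L : ∀ i ≤ N + 1, x i ≤ L := fun i hi =>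
    hxL ▸ hxmono (Set.mem_Iic.mpr hi) (Set.mem_Iic.mpr le_rfl) hi
  have hL : 0 ≤ L := hx0 ▸ hx_le_L 0 (Nat.zero_le _)
  set E := discreteEnergy x v (N + 1)
  have hE : 0 ≤ E := discreteEnergy_nonneg (fun j hj => (hstep j hj).le) v
  have hv_sq : ∀ i ∈ Icc 1 N, v i ^ 2 ≤ L * E := fun i hi => by
    have hi : i ≤ N + 1 := by simp only [mem_Icc] at hi; omega
    have h := sq_sub_le_mul_discreteEnergy (fun j hj => hstep j (by omega)) v (n := i)
    rw [hv0, hx0, sub_zero, sub_zero] at h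
    exact h.trans <| mul_le_mul (hx_le_L i hi)
      (discreteEnergy_mono (fun j hj => (hstep j hj).le) hi v)
      (discreteEnergy_nonneg (fun j hj => (hstep j (by omega)).le) v) hL
  have hweight : ∀ i ∈ Icc 1 N, 0 ≤ ((x i - x (i - 1)) + (x (i + 1) - x i)) / 2 := fun i hi => by
    simp only [mem_Icc] at hi
    have h₁ := hmono (i - 1) (by omega)
    rw [Nat.sub_add_cancel hi.1] at h₁
    linarith [hmono i hi.2]
  have hweights : ∑ i ∈ Icc 1 N, ((x i - x (i - 1)) + (x (i + 1) - x i)) / 2 ≤ L := by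
    rw [← sum_div, sum_Icc_dualMesh, hx0, hxL]
    linarith [hx_le_L N (by omega), hx0 ▸ (hstep 0 (by omega)).le]
  calc ∑ i ∈ Icc 1 N, ((x i - x (i - 1)) + (x (i + 1) - x i)) / 2 * v i ^ 2
      ≤ ∑ i ∈ Icc 1 N, ((x i - x (i - 1)) + (x (i + 1) - x i)) / 2 * (L * E) :=
        sum_le_sum fun i hi => mul_le_mul_of_nonneg_left (hv_sq i hi) (hweight i hi)
    _ = (∑ i ∈ Icc 1 N, ((x i - x (i - 1)) + (x (i + 1) - x i)) / 2) * (L * E) :=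
        (sum_mul ..).symm
    _ ≤ L * (L * E) := mul_le_mul_of_nonneg_right hweights (mul_nonneg hL hE)
    _ = L ^ 2 * E := by ring

/-- Discrete Poincaré inequality in 1D: for a partition `0 = x₀ < x₁ < ... < x_{N+1} = L`
of `(0,L)`, `v : ℕ → ℝ` with `v 0 = v (N+1) = 0`, and `h i = x (i+1) - x i`,
`Σ_{i=1}^N h'_i v_i² ≤ L² Σ_{i=0}^N h_i ((v_{i+1}-v_i)/h_i)²` where `h'_i = (h_{i-1}+h_i)/2`. -/
theorem discrete_poincare_1d (N : ℕ) (L : ℝ) (x : ℕ → ℝ)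
    (hx0 : x 0 = 0) (hxL : x (N + 1) = L)
    (hmono : ∀ i ≤ N, x i < x (i + 1))
    (v : ℕ → ℝ) (hv0 : v 0 = 0) (hvN : v (N + 1) = 0) :
    ∑ i ∈ Finset.Icc 1 N, ((x i - x (i - 1)) + (x (i + 1) - x i)) / 2 * (v i) ^ 2
      ≤ L ^ 2 * ∑ i ∈ Finset.range (N + 1),
          (x (i + 1) - x i) * ((v (i + 1) - v i) / (x (i + 1) - x i)) ^ 2 :=
  discrete_poincare_1d_general N L x hx0 hxL hmono v hv0
end

section
/- A priori estimate for the TPFA scheme on a graph with Dirichlet boundary: let V = V_int ∪ V_bd be a finite set of cells, E a set of edges, τ_σ ≥ c·w_σ for positive weights w_σ and a constant c > 0, and suppose u : V → ℝ with u = 0 on V_bd satisfies the flux balances Σ_{σ ∋ K} τ_σ(u_K - u_L) = b_K for all K ∈ V_int. If the discrete Poincaré inequality Σ_{K∈V_int} m_K u_K² ≤ C_P² Σ_{σ={K,L}∈E} w_σ (u_K-u_L)² holds (with cell measures m_K > 0), then Σ_{σ∈E} w_σ (u_K-u_L)² ≤ (C_P/c)² Σ_{K∈V_int} b_K²/m_K.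 -/
/-!
Testing the flux balances against `u` and regrouping the double sum by edges (summation by
parts, using `u = 0` off `Vint`) turns `Σ_K u_K b_K` into the discrete energy
`Σ_σ τ_σ (u_K - u_L)² ≥ c Σ_σ w_σ (u_K - u_L)²`. Cauchy–Schwarz with weights `m_K` bounds
`Σ_K u_K b_K` by `(Σ_K m_K u_K²)^{1/2} (Σ_K b_K²/m_K)^{1/2}`, and the Poincaré inequality
bounds the first factor by `C_P` times the square root of the energy; dividing by the root
of the energy gives the estimate.
-/

/-- The sum over edges incident to the cell `K` of the two-point fluxes
`F_{K,σ} = τ_σ (u_K - u_L)`. -/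
def incidentFluxSum {V : Type*} [DecidableEq V] (E : Finset (V × V)) (τ : V × V → ℝ)
    (u : V → ℝ) (K : V) : ℝ :=
  (∑ σ ∈ E.filter fun σ => σ.1 = K, τ σ * (u K - u σ.2)) +
    ∑ σ ∈ E.filter fun σ => σ.2 = K, τ σ * (u K - u σ.1)

open Finset

section Flux

variable {V : Type*} [DecidableEq V] (E : Finset (V × V))

theorem mul_incidentFluxSum (τ : V × V → ℝ) (u : V → ℝ) (K : V) :
    u K * incidentFluxSum E τ u K =
      (∑ σ ∈ E with σ.1 = K, u σ.1 * (τ σ * (u σ.1 - u σ.2))) +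
        ∑ σ ∈ E with σ.2 = K, u σ.2 * (τ σ * (u σ.2 - u σ.1)) := by
  rw [incidentFluxSum, mul_add, mul_sum, mul_sum]
  congr 1 <;> refine sum_congr rfl fun σ hσ => ?_ <;> rw [(mem_filter.mp hσ).2]

theorem sum_mul_incidentFluxSum [Fintype V] (τ : V × V → ℝ) (u : V → ℝ) :
    ∑ K, u K * incidentFluxSum E τ u K = ∑ σ ∈ E, τ σ * (u σ.1 - u σ.2) ^ 2 := by
  simp_rw [mul_incidentFluxSum, sum_add_distrib]
  rw [sum_fiberwise_of_maps_to (fun σ _ => mem_univ σ.1),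
    sum_fiberwise_of_maps_to (fun σ _ => mem_univ σ.2), ← sum_add_distrib]
  exact sum_congr rfl fun σ _ => by ring

theorem mul_sum_le_sum_mul_of_incidentFluxSum_eq [Fintype V] {Vint : Finset V}
    {τ w : V × V → ℝ} {c : ℝ} (hτ : ∀ σ ∈ E, c * w σ ≤ τ σ) {u b : V → ℝ}
    (hbd : ∀ K, K ∉ Vint → u K = 0) (hflux : ∀ K ∈ Vint, incidentFluxSum E τ u K = b K) :
    c * ∑ σ ∈ E, w σ * (u σ.1 - u σ.2) ^ 2 ≤ ∑ K ∈ Vint, u K * b K := by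
  have hub : ∑ K ∈ Vint, u K * b K = ∑ K, u K * incidentFluxSum E τ u K := by
    rw [← sum_subset (subset_univ Vint) fun K _ hK => by rw [hbd K hK, zero_mul]]
    exact sum_congr rfl fun K hK => by rw [hflux K hK]
  rw [hub, sum_mul_incidentFluxSum, mul_sum]
  refine sum_le_sum fun σ hσ => ?_
  rw [← mul_assoc]
  exact mul_le_mul_of_nonneg_right (hτ σ hσ) (sq_nonneg _)

end Flux

theorem Finset.sq_sum_mul_le_sum_mul_sq_mul_sum_sq_div {ι : Type*} (s : Finset ι)
    {m : ι → ℝ} (hm : ∀ i ∈ s, 0 < m i) (u b : ι → ℝ) :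
    (∑ i ∈ s, u i * b i) ^ 2 ≤ (∑ i ∈ s, m i * u i ^ 2) * ∑ i ∈ s, b i ^ 2 / m i :=
  sum_sq_le_sum_mul_sum_of_sq_le_mul s
    (fun i hi => mul_nonneg (hm i hi).le (sq_nonneg _))
    (fun i hi => div_nonneg (sq_nonneg _) (hm i hi).le)
    fun i hi => le_of_eq <| by field_simp [(hm i hi).ne']

theorem le_div_sq_mul_of_mul_le_of_sq_le {S X P T c C : ℝ} (hc : 0 < c) (hT : 0 ≤ T)
    (hS : c * S ≤ X) (hX : X ^ 2 ≤ P * T) (hP : P ≤ C ^ 2 * S) : S ≤ (C / c) ^ 2 * T := by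
  rcases le_or_gt S 0 with hS0 | hS0
  · exact hS0.trans (by positivity)
  have hcS : (c * S) ^ 2 ≤ C ^ 2 * S * T :=
    calc (c * S) ^ 2 ≤ X ^ 2 := pow_le_pow_left₀ (by positivity) hS 2
      _ ≤ P * T := hX
      _ ≤ C ^ 2 * S * T := mul_le_mul_of_nonneg_right hP hT
  have : c ^ 2 * S ≤ C ^ 2 * T := le_of_mul_le_mul_right (by linarith) hS0
  rw [div_pow, div_mul_eq_mul_div, le_div_iff₀ (by positivity)]
  linarith

theorem tpfa_apriori_estimate_general {V : Type*} [Fintype V] [DecidableEq V]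
    (Vint : Finset V) (E : Finset (V × V))
    (τ w : V × V → ℝ) (c CP : ℝ) (hc : 0 < c)
    (hτ : ∀ σ ∈ E, c * w σ ≤ τ σ)
    (m : V → ℝ) (hm : ∀ K ∈ Vint, 0 < m K)
    (u b : V → ℝ) (hbd : ∀ K, K ∉ Vint → u K = 0)
    (hflux : ∀ K ∈ Vint, incidentFluxSum E τ u K = b K)
    (hPoinc : ∑ K ∈ Vint, m K * u K ^ 2 ≤ CP ^ 2 * ∑ σ ∈ E, w σ * (u σ.1 - u σ.2) ^ 2) :
    ∑ σ ∈ E, w σ * (u σ.1 - u σ.2) ^ 2 ≤ (CP / c) ^ 2 * ∑ K ∈ Vint, b K ^ 2 / m K :=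
  le_div_sq_mul_of_mul_le_of_sq_le hc
    (sum_nonneg fun K hK => div_nonneg (sq_nonneg _) (hm K hK).le)
    (mul_sum_le_sum_mul_of_incidentFluxSum_eq E hτ hbd hflux)
    (Vint.sq_sum_mul_le_sum_mul_sq_mul_sum_sq_div hm u b) hPoinc

/-- A priori (energy) estimate for the TPFA scheme on a graph with Dirichlet boundary:
if `τ_σ ≥ c w_σ`, `u = 0` on boundary cells, the flux balances
`Σ_{σ∋K} τ_σ(u_K - u_L) = b_K` hold on interior cells, and the discrete Poincaré
inequality `Σ_K m_K u_K² ≤ C_P² Σ_σ w_σ (u_K - u_L)²` holds, then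
`Σ_σ w_σ (u_K - u_L)² ≤ (C_P/c)² Σ_K b_K²/m_K`. -/
theorem tpfa_apriori_estimate {V : Type*} [Fintype V] [DecidableEq V]
    (Vint : Finset V) (E : Finset (V × V)) (hE : ∀ σ ∈ E, σ.1 ≠ σ.2)
    (τ w : V × V → ℝ) (c CP : ℝ) (hc : 0 < c) (hCP : 0 ≤ CP)
    (hw : ∀ σ ∈ E, 0 < w σ) (hτ : ∀ σ ∈ E, c * w σ ≤ τ σ)
    (m : V → ℝ) (hm : ∀ K ∈ Vint, 0 < m K)
    (u b : V → ℝ) (hbd : ∀ K, K ∉ Vint → u K = 0)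
    (hflux : ∀ K ∈ Vint, incidentFluxSum E τ u K = b K)
    (hPoinc : ∑ K ∈ Vint, m K * u K ^ 2 ≤ CP ^ 2 * ∑ σ ∈ E, w σ * (u σ.1 - u σ.2) ^ 2) :
    ∑ σ ∈ E, w σ * (u σ.1 - u σ.2) ^ 2 ≤ (CP / c) ^ 2 * ∑ K ∈ Vint, b K ^ 2 / m K :=
  tpfa_apriori_estimate_general Vint E τ w c CP hc hτ m hm u b hbd hflux hPoinc
end

section
/- Maximum principle for the TPFA scheme: under the assumptions of the previous statement, if b_K ≥ 0 for all K ∈ V_int, then the solution u of the TPFA system satisfies u_K ≥ 0 for all K ∈ V_int. -/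
/-- Adjacency relation of the (unoriented) graph whose edges are stored in `E`. -/
def graphAdj {V : Type*} (E : Finset (V × V)) (K L : V) : Prop :=
  (K, L) ∈ E ∨ (L, K) ∈ E

/-!
At a global minimum `K` of `u` every flux `τ_σ (u_K - u_L)` leaving `K` is `≤ 0`, so a
nonnegative flux balance forces all of them to vanish and `u` takes the minimal value at every
neighbour as well. If `u` had a negative value in the interior, its minimum would be negative,
hence attained only at interior cells (where `b ≥ 0`); spreading it along a path to the boundary
would give a boundary cell with `u < 0`, contradicting `u = 0` there.
-/

section

open Finset

variable {V : Type*} [DecidableEq V] {E : Finset (V × V)} {τ : V × V → ℝ} {u : V → ℝ}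

theorem eq_of_graphAdj_of_forall_le (hτ : ∀ σ ∈ E, 0 < τ σ) {K L : V}
    (hmin : ∀ M, u K ≤ u M) (hflux : 0 ≤ incidentFluxSum E τ u K) (hKL : graphAdj E K L) :
    u L = u K := by
  have hout : ∀ σ ∈ E.filter fun σ => σ.1 = K, τ σ * (u K - u σ.2) ≤ 0 := fun σ hσ =>
    mul_nonpos_of_nonneg_of_nonpos (hτ σ (mem_filter.1 hσ).1).le (sub_nonpos.2 (hmin _))
  have hin : ∀ σ ∈ E.filter fun σ => σ.2 = K, τ σ * (u K - u σ.1) ≤ 0 := fun σ hσ =>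
    mul_nonpos_of_nonneg_of_nonpos (hτ σ (mem_filter.1 hσ).1).le (sub_nonpos.2 (hmin _))
  have hout_sum := sum_nonpos hout
  have hin_sum := sum_nonpos hin
  unfold incidentFluxSum at hflux
  have hout_zero := (sum_eq_zero_iff_of_nonpos hout).1 (by linarith)
  have hin_zero := (sum_eq_zero_iff_of_nonpos hin).1 (by linarith)
  have hdiff : u K - u L = 0 := by
    rcases hKL with hKL | hLK
    · exact (mul_eq_zero.1 (hout_zero (K, L) (mem_filter.2 ⟨hKL, rfl⟩))).resolve_left
        (hτ _ hKL).ne'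
    · exact (mul_eq_zero.1 (hin_zero (L, K) (mem_filter.2 ⟨hLK, rfl⟩))).resolve_left
        (hτ _ hLK).ne'
  linarith

theorem eq_of_reflTransGen_of_forall_le (hτ : ∀ σ ∈ E, 0 < τ σ) {m : ℝ}
    (hmin : ∀ M, m ≤ u M) (hflux : ∀ K, u K = m → 0 ≤ incidentFluxSum E τ u K) {K L : V}
    (hKL : Relation.ReflTransGen (graphAdj E) K L) (hK : u K = m) : u L = m := by
  induction hKL with
  | refl => exact hK
  | tail _ hadj ih =>
    rw [eq_of_graphAdj_of_forall_le hτ (fun M => ih ▸ hmin M) (hflux _ ih) hadj, ih]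

end

theorem tpfa_maximum_principle_general {V : Type*} [DecidableEq V]
    (Vint : Finset V) (E : Finset (V × V))
    (τ : V × V → ℝ) (hτ : ∀ σ ∈ E, 0 < τ σ)
    (hconn : ∀ K : V, ∃ B : V, B ∉ Vint ∧ Relation.ReflTransGen (graphAdj E) K B)
    (u b : V → ℝ) (hbd : ∀ K, K ∉ Vint → u K = 0)
    (hflux : ∀ K ∈ Vint, incidentFluxSum E τ u K = b K)
    (hb : ∀ K ∈ Vint, 0 ≤ b K) :
    ∀ K ∈ Vint, 0 ≤ u K := by
  intro K hK
  by_contra! hneg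
  obtain ⟨K₀, -, hK₀⟩ := Vint.exists_min_image u ⟨K, hK⟩
  have hneg₀ : u K₀ < 0 := (hK₀ K hK).trans_lt hneg
  have hmem : ∀ L, u L = u K₀ → L ∈ Vint := fun L hL => by
    by_contra hL'
    linarith [hbd L hL']
  have hmin : ∀ L, u K₀ ≤ u L := fun L => by
    by_cases hL : L ∈ Vint
    · exact hK₀ L hL
    · linarith [hbd L hL]
  have hflux₀ : ∀ L, u L = u K₀ → 0 ≤ incidentFluxSum E τ u L := fun L hL =>
    hflux L (hmem L hL) ▸ hb L (hmem L hL)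
  obtain ⟨B, hB, hpath⟩ := hconn K₀
  exact hB (hmem B (eq_of_reflTransGen_of_forall_le hτ hmin hflux₀ hpath rfl))

/-- Maximum principle for the TPFA scheme: with positive transmissivities, every connected
component touching the boundary, homogeneous Dirichlet values `u = 0` on boundary cells and
flux balances `Σ_{σ∋K} τ_σ(u_K - u_L) = b_K` on interior cells, if `b_K ≥ 0` for all
interior `K` then `u_K ≥ 0` for all interior `K`. -/
theorem tpfa_maximum_principle {V : Type*} [Fintype V] [DecidableEq V]
    (Vint : Finset V) (E : Finset (V × V)) (hE : ∀ σ ∈ E, σ.1 ≠ σ.2)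
    (τ : V × V → ℝ) (hτ : ∀ σ ∈ E, 0 < τ σ)
    (hconn : ∀ K : V, ∃ B : V, B ∉ Vint ∧ Relation.ReflTransGen (graphAdj E) K B)
    (u b : V → ℝ) (hbd : ∀ K, K ∉ Vint → u K = 0)
    (hflux : ∀ K ∈ Vint, incidentFluxSum E τ u K = b K)
    (hb : ∀ K ∈ Vint, 0 ≤ b K) :
    ∀ K ∈ Vint, 0 ≤ u K :=
  tpfa_maximum_principle_general Vint E τ hτ hconn u b hbd hflux hb
end

section
/- Discrete time-translate estimate: let u : [0,T] → L²(Ω) be absolutely continuous with derivative ∂_t u ∈ L²(0,T; H^{-1}(Ω)) and u ∈ L²(0,T; H¹₀(Ω)). Then for all τ ∈ (0,T), ∫_0^{T-τ} ‖u(t+τ) - u(t)‖²_{L²(Ω)} dt ≤ τ · 2‖∂_t u‖_{L²(0,T;H^{-1})} ‖u‖_{L²(0,T;H¹₀)}. -/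
/-!
Pairing the energy identity for `u(t+τ) - u(t)` with Young's inequality, for a weight `μ > 0`,
bounds `‖u(t+τ) - u(t)‖²` by `μ⁻¹ ∫_t^{t+τ} ‖u'‖² + (μτ/2) (‖u(t+τ)‖² + ‖u(t)‖²)`.
Integrating in `t`, every time `s` lies in windows `[t, t+τ]` for a set of `t` of length at most
`τ`, so the right side integrates to at most `τ (μ⁻¹ ‖u'‖² + μ ‖u‖²)` (squared `L²` norms);
minimising over `μ` gives `2τ ‖u'‖ ‖u‖`.
-/

open MeasureTheory intervalIntegral Set Filter Topology

lemma le_two_mul_sqrt_mul_sqrt_of_forall_pos {S a b : ℝ} (ha : 0 ≤ a) (hb : 0 ≤ b)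
    (h : ∀ μ : ℝ, 0 < μ → S ≤ μ⁻¹ * a + μ * b) : S ≤ 2 * √a * √b := by
  have hlim : Tendsto (fun ε => (√b + ε) * √a + (√a + ε) * √b) (𝓝[>] 0)
      (𝓝 (2 * √a * √b)) := by
    have hcont : Continuous fun ε => (√b + ε) * √a + (√a + ε) * √b := by fun_prop
    convert (hcont.tendsto 0).mono_left nhdsWithin_le_nhds using 2
    ring
  refine ge_of_tendsto hlim (eventually_nhdsWithin_of_forall fun ε (hε : 0 < ε) => ?_)
  have hsq_div : ∀ x : ℝ, 0 ≤ x → x ^ 2 / (x + ε) ≤ x := fun x hx => by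
    rw [div_le_iff₀ (by positivity)]
    nlinarith
  have hsa := Real.sqrt_nonneg a
  have hsb := Real.sqrt_nonneg b
  -- the optimal weight `√a / √b`, perturbed to stay positive and finite when `a` or `b` vanishes
  calc S ≤ ((√a + ε) / (√b + ε))⁻¹ * a + (√a + ε) / (√b + ε) * b := h _ (by positivity)
    _ = (√b + ε) * (√a ^ 2 / (√a + ε)) + (√a + ε) * (√b ^ 2 / (√b + ε)) := by
      rw [Real.sq_sqrt ha, Real.sq_sqrt hb, inv_div]
      ring
    _ ≤ (√b + ε) * √a + (√a + ε) * √b := by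
      gcongr
      exacts [hsq_div _ hsa, hsq_div _ hsb]

lemma ContinuousLinearMap.apply_sub_le_young {E : Type*} [NormedAddCommGroup E]
    [NormedSpace ℝ E] (φ : E →L[ℝ] ℝ) (x y : E) {μ : ℝ} (hμ : 0 < μ) :
    φ (x - y) ≤ μ⁻¹ * ‖φ‖ ^ 2 + μ / 2 * (‖x‖ ^ 2 + ‖y‖ ^ 2) := by
  set q := ‖x‖ + ‖y‖
  have hpair : φ (x - y) ≤ ‖φ‖ * q :=
    (le_abs_self _).trans <| (φ.le_opNorm _).trans <| by gcongr; exact norm_sub_le x y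
  have hyoung : ‖φ‖ * q ≤ μ⁻¹ * ‖φ‖ ^ 2 + μ / 4 * q ^ 2 := by
    have hsq : 0 ≤ μ⁻¹ * (‖φ‖ - μ / 2 * q) ^ 2 := by positivity
    have hexp : μ⁻¹ * (‖φ‖ - μ / 2 * q) ^ 2 = μ⁻¹ * ‖φ‖ ^ 2 + μ / 4 * q ^ 2 - ‖φ‖ * q := by
      field_simp
      ring
    linarith
  have hq : μ / 4 * q ^ 2 ≤ μ / 2 * (‖x‖ ^ 2 + ‖y‖ ^ 2) := by
    nlinarith [add_sq_le (a := ‖x‖) (b := ‖y‖)]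
  linarith

lemma intervalIntegral.integral_mono_on_of_nonneg_right {μ : Measure ℝ} {f g : ℝ → ℝ}
    {a b : ℝ} (hab : a ≤ b) (hg : IntervalIntegrable g μ a b) (hg0 : ∀ x ∈ Icc a b, 0 ≤ g x)
    (h : ∀ x ∈ Icc a b, f x ≤ g x) : ∫ x in a..b, f x ∂μ ≤ ∫ x in a..b, g x ∂μ := by
  by_cases hf : IntervalIntegrable f μ a b
  · exact integral_mono_on hab hf hg h
  · rw [integral_undef hf]
    exact integral_nonneg hab hg0

lemma integral_apply_sub_le_young {E : Type*} [NormedAddCommGroup E] [NormedSpace ℝ E]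
    {f : ℝ → E →L[ℝ] ℝ} {a b μ : ℝ} (hab : a ≤ b)
    (hf : IntervalIntegrable (fun s => ‖f s‖ ^ 2) volume a b) (x y : E) (hμ : 0 < μ) :
    ∫ s in a..b, f s (x - y)
      ≤ μ⁻¹ * (∫ s in a..b, ‖f s‖ ^ 2) + μ / 2 * (b - a) * (‖x‖ ^ 2 + ‖y‖ ^ 2) := by
  have hgi : IntervalIntegrable (fun s => μ⁻¹ * ‖f s‖ ^ 2 + μ / 2 * (‖x‖ ^ 2 + ‖y‖ ^ 2))
      volume a b := (hf.const_mul _).add intervalIntegrable_const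
  calc ∫ s in a..b, f s (x - y)
      ≤ ∫ s in a..b, (μ⁻¹ * ‖f s‖ ^ 2 + μ / 2 * (‖x‖ ^ 2 + ‖y‖ ^ 2)) :=
        integral_mono_on_of_nonneg_right hab hgi (fun _ _ => by positivity)
          fun s _ => (f s).apply_sub_le_young x y hμ
    _ = _ := by
      rw [integral_add (hf.const_mul _) intervalIntegrable_const,
        intervalIntegral.integral_const_mul, intervalIntegral.integral_const, smul_eq_mul]
      ring

section Window

variable {F g : ℝ → ℝ} {a b τ : ℝ}

lemma IntervalIntegrable.comp_add_right_of_le (hg : IntervalIntegrable g volume a b)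
    (hτ : 0 ≤ τ) (hτab : a + τ ≤ b) :
    IntervalIntegrable (fun t => g (t + τ)) volume a (b - τ) := by
  simpa using (hg.mono_set (uIcc_subset_uIcc_right
    (mem_uIcc_of_le (by linarith) hτab))).comp_add_right τ

lemma IntervalIntegrable.mono_right_sub (hg : IntervalIntegrable g volume a b)
    (hτ : 0 ≤ τ) (hτab : a + τ ≤ b) : IntervalIntegrable g volume a (b - τ) :=
  hg.mono_set (uIcc_subset_uIcc_left (mem_uIcc_of_le (by linarith) (by linarith)))

lemma MonotoneOn.intervalIntegrable_of_mem (hF : MonotoneOn F (Icc a b)) {c d : ℝ}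
    (hc : c ∈ Icc a b) (hd : d ∈ Icc a b) : IntervalIntegrable F volume c d :=
  (hF.mono (uIcc_subset_Icc hc hd)).intervalIntegrable

lemma MonotoneOn.integral_comp_add_right_sub_le (hF : MonotoneOn F (Icc a b))
    (hτ : 0 ≤ τ) (hτab : a + τ ≤ b) :
    ∫ t in a..b - τ, (F (t + τ) - F t) ≤ τ * (F b - F a) := by
  -- the integral telescopes to `∫_{b-τ}^b F - ∫_a^{a+τ} F`
  have hab : a ≤ b := by linarith
  have hFi {c d : ℝ} : c ∈ Icc a b → d ∈ Icc a b → IntervalIntegrable F volume c d :=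
    hF.intervalIntegrable_of_mem
  have ha : a ∈ Icc a b := ⟨le_rfl, hab⟩
  have hb : b ∈ Icc a b := ⟨hab, le_rfl⟩
  have haτ : a + τ ∈ Icc a b := ⟨by linarith, hτab⟩
  have hbτ : b - τ ∈ Icc a b := ⟨by linarith, by linarith⟩
  rw [integral_sub ((hFi ha hb).comp_add_right_of_le hτ hτab) (hFi ha hbτ),
    integral_comp_add_right, sub_add_cancel,
    integral_interval_sub_interval_comm' (hFi haτ hb) (hFi ha hbτ) (hFi haτ ha)]
  have hupper : ∫ t in b - τ..b, F t ≤ τ * F b := by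
    calc ∫ t in b - τ..b, F t ≤ ∫ _ in b - τ..b, F b :=
          integral_mono_on (by linarith) (hFi hbτ hb) intervalIntegrable_const
            fun t ht => hF ⟨by linarith [ht.1], ht.2⟩ hb ht.2
      _ = τ * F b := by simp
  have hlower : τ * F a ≤ ∫ t in a..a + τ, F t := by
    calc τ * F a = ∫ _ in a..a + τ, F a := by simp
      _ ≤ ∫ t in a..a + τ, F t :=
          integral_mono_on (by linarith) intervalIntegrable_const (hFi ha haτ)
            fun t ht => hF ha ⟨ht.1, by linarith [ht.2]⟩ ht.1
  linarith

lemma monotoneOn_primitive_of_nonneg (hg : IntervalIntegrable g volume a b)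
    (hg0 : ∀ x, 0 ≤ g x) : MonotoneOn (fun x => ∫ s in a..x, g s) (Icc a b) :=
  fun _ hx _ hy hxy => integral_mono_interval le_rfl hx.1 hxy (ae_of_all _ fun s => hg0 s)
    (hg.mono_set (uIcc_subset_uIcc_left (mem_uIcc_of_le hy.1 hy.2)))

lemma eqOn_integral_window_sub_primitive (hg : IntervalIntegrable g volume a b)
    (hτ : 0 ≤ τ) (hτab : a + τ ≤ b) :
    EqOn (fun t => ∫ s in t..t + τ, g s)
      (fun t => (∫ s in a..t + τ, g s) - ∫ s in a..t, g s) (uIcc a (b - τ)) := by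
  intro t ht
  rw [uIcc_of_le (by linarith)] at ht
  have hmem {x : ℝ} (h1 : a ≤ x) (h2 : x ≤ b) : IntervalIntegrable g volume a x :=
    hg.mono_set (uIcc_subset_uIcc_left (mem_uIcc_of_le h1 h2))
  exact (integral_interval_sub_left (hmem (by linarith [ht.1]) (by linarith [ht.2]))
    (hmem ht.1 (by linarith [ht.2]))).symm

lemma intervalIntegrable_integral_window (hg : IntervalIntegrable g volume a b)
    (hg0 : ∀ x, 0 ≤ g x) (hτ : 0 ≤ τ) (hτab : a + τ ≤ b) :
    IntervalIntegrable (fun t => ∫ s in t..t + τ, g s) volume a (b - τ) := by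
  have hF := (monotoneOn_primitive_of_nonneg hg hg0).intervalIntegrable_of_mem
    (left_mem_Icc.2 (by linarith)) (right_mem_Icc.2 (by linarith))
  exact ((hF.comp_add_right_of_le hτ hτab).sub (hF.mono_right_sub hτ hτab)).congr
    ((eqOn_integral_window_sub_primitive hg hτ hτab).symm.mono uIoc_subset_uIcc)

lemma integral_integral_window_le (hg : IntervalIntegrable g volume a b)
    (hg0 : ∀ x, 0 ≤ g x) (hτ : 0 ≤ τ) (hτab : a + τ ≤ b) :
    ∫ t in a..b - τ, ∫ s in t..t + τ, g s ≤ τ * ∫ s in a..b, g s := by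
  rw [integral_congr (eqOn_integral_window_sub_primitive hg hτ hτab)]
  simpa using (monotoneOn_primitive_of_nonneg hg hg0).integral_comp_add_right_sub_le hτ hτab

lemma intervalIntegrable_comp_add_right_add (hg : IntervalIntegrable g volume a b)
    (hτ : 0 ≤ τ) (hτab : a + τ ≤ b) :
    IntervalIntegrable (fun t => g (t + τ) + g t) volume a (b - τ) :=
  (hg.comp_add_right_of_le hτ hτab).add (hg.mono_right_sub hτ hτab)

lemma integral_comp_add_right_add_le (hg : IntervalIntegrable g volume a b)
    (hg0 : ∀ x, 0 ≤ g x) (hτ : 0 ≤ τ) (hτab : a + τ ≤ b) :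
    ∫ t in a..b - τ, (g (t + τ) + g t) ≤ 2 * ∫ t in a..b, g t := by
  have hg0' : 0 ≤ᵐ[volume.restrict (Ioc a b)] g := ae_of_all _ hg0
  rw [integral_add (hg.comp_add_right_of_le hτ hτab) (hg.mono_right_sub hτ hτab),
    integral_comp_add_right, sub_add_cancel, two_mul]
  gcongr
  · exact integral_mono_interval (by linarith) hτab le_rfl hg0' hg
  · exact integral_mono_interval le_rfl (by linarith) (by linarith) hg0' hg

end Window

lemma integral_sq_norm_sub_comp_add_le {V H : Type*} [NormedAddCommGroup V] [NormedSpace ℝ V]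
    [NormedAddCommGroup H] [InnerProductSpace ℝ H] (i : V →L[ℝ] H) {T τ μ : ℝ}
    (hτ : 0 ≤ τ) (hτT : τ ≤ T) {u : ℝ → V} {u' : ℝ → V →L[ℝ] ℝ}
    (hAC : ∀ t, 0 ≤ t → t + τ ≤ T →
      ‖i (u (t + τ)) - i (u t)‖ ^ 2 = ∫ s in t..(t + τ), u' s (u (t + τ) - u t))
    (hu'2 : IntervalIntegrable (fun s => ‖u' s‖ ^ 2) volume 0 T)
    (hu2 : IntervalIntegrable (fun s => ‖u s‖ ^ 2) volume 0 T) (hμ : 0 < μ) :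
    ∫ t in (0 : ℝ)..(T - τ), ‖i (u (t + τ)) - i (u t)‖ ^ 2
      ≤ τ * (μ⁻¹ * (∫ s in (0 : ℝ)..T, ‖u' s‖ ^ 2) + μ * ∫ s in (0 : ℝ)..T, ‖u s‖ ^ 2) := by
  have hτT' : 0 + τ ≤ T := by linarith
  have hu'0 : ∀ s, 0 ≤ ‖u' s‖ ^ 2 := fun _ => by positivity
  have hu0 : ∀ s, 0 ≤ ‖u s‖ ^ 2 := fun _ => by positivity
  have hpt : ∀ t ∈ Icc 0 (T - τ), ‖i (u (t + τ)) - i (u t)‖ ^ 2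
      ≤ μ⁻¹ * (∫ s in t..t + τ, ‖u' s‖ ^ 2) + μ / 2 * τ * (‖u (t + τ)‖ ^ 2 + ‖u t‖ ^ 2) := by
    intro t ht
    have htτ : t + τ ≤ T := by linarith [ht.2]
    have hu'2t : IntervalIntegrable (fun s => ‖u' s‖ ^ 2) volume t (t + τ) :=
      hu'2.mono_set (uIcc_subset_uIcc (mem_uIcc_of_le ht.1 (by linarith))
        (mem_uIcc_of_le (by linarith [ht.1]) htτ))
    rw [hAC t ht.1 htτ]
    simpa using integral_apply_sub_le_young (by linarith) hu'2t _ _ hμ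
  have hW := intervalIntegrable_integral_window hu'2 hu'0 hτ hτT'
  have hS := intervalIntegrable_comp_add_right_add hu2 hτ hτT'
  calc ∫ t in (0 : ℝ)..(T - τ), ‖i (u (t + τ)) - i (u t)‖ ^ 2
      ≤ ∫ t in (0 : ℝ)..(T - τ), (μ⁻¹ * (∫ s in t..t + τ, ‖u' s‖ ^ 2)
          + μ / 2 * τ * (‖u (t + τ)‖ ^ 2 + ‖u t‖ ^ 2)) :=
        integral_mono_on_of_nonneg_right (by linarith) ((hW.const_mul _).add (hS.const_mul _))
          (fun t ht => (sq_nonneg _).trans (hpt t ht)) hpt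
    _ = μ⁻¹ * (∫ t in (0 : ℝ)..(T - τ), ∫ s in t..t + τ, ‖u' s‖ ^ 2)
          + μ / 2 * τ * ∫ t in (0 : ℝ)..(T - τ), (‖u (t + τ)‖ ^ 2 + ‖u t‖ ^ 2) := by
      rw [integral_add (hW.const_mul _) (hS.const_mul _), intervalIntegral.integral_const_mul,
        intervalIntegral.integral_const_mul]
    _ ≤ μ⁻¹ * (τ * ∫ s in (0 : ℝ)..T, ‖u' s‖ ^ 2)
          + μ / 2 * τ * (2 * ∫ s in (0 : ℝ)..T, ‖u s‖ ^ 2) := by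
      gcongr
      · exact integral_integral_window_le hu'2 hu'0 hτ hτT'
      · exact integral_comp_add_right_add_le hu2 hu0 hτ hτT'
    _ = _ := by ring

theorem time_translate_estimate_general
    {V H : Type*} [NormedAddCommGroup V] [NormedSpace ℝ V]
    [NormedAddCommGroup H] [InnerProductSpace ℝ H]
    (i : V →L[ℝ] H)
    (T τ : ℝ) (hτ0 : 0 < τ) (hτT : τ < T)
    (u : ℝ → V) (u' : ℝ → V →L[ℝ] ℝ)
    -- absolute continuity with derivative `u'` in the dual of `V`:
    (hAC : ∀ t, 0 ≤ t → t + τ ≤ T →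
      ‖i (u (t + τ)) - i (u t)‖ ^ 2 = ∫ s in t..(t + τ), u' s (u (t + τ) - u t))
    -- `∂_t u ∈ L²(0,T;V')` and `u ∈ L²(0,T;V)`:
    (hu'2 : IntervalIntegrable (fun s => ‖u' s‖ ^ 2) volume 0 T)
    (hu2 : IntervalIntegrable (fun s => ‖u s‖ ^ 2) volume 0 T) :
    ∫ t in (0 : ℝ)..(T - τ), ‖i (u (t + τ)) - i (u t)‖ ^ 2
      ≤ τ * (2 * Real.sqrt (∫ s in (0 : ℝ)..T, ‖u' s‖ ^ 2) *
        Real.sqrt (∫ s in (0 : ℝ)..T, ‖u s‖ ^ 2)) := by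
  have hT : 0 ≤ T := by linarith
  rw [← div_le_iff₀' hτ0]
  exact le_two_mul_sqrt_mul_sqrt_of_forall_pos (integral_nonneg hT fun _ _ => by positivity)
    (integral_nonneg hT fun _ _ => by positivity) fun μ hμ =>
      (div_le_iff₀' hτ0).2 (integral_sq_norm_sub_comp_add_le i hτ0.le hτT.le hAC hu'2 hu2 hμ)

/-- Time-translate estimate: let `V` be the (abstract) space `H¹₀(Ω)`, `H` the Hilbert
space `L²(Ω)` with embedding `i : V → H`, and let `u : [0,T] → H` be absolutely continuous
with derivative `∂_t u = u' ∈ L²(0,T;V')` — encoded by the identity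
`‖u(t+τ)-u(t)‖²_H = ∫_t^{t+τ} ⟨u'(s), u(t+τ)-u(t)⟩ ds` — and `u ∈ L²(0,T;V)`. Then for
`τ ∈ (0,T)`:
`∫_0^{T-τ} ‖u(t+τ) - u(t)‖²_{L²} dt ≤ τ · 2 ‖∂_t u‖_{L²(0,T;H⁻¹)} ‖u‖_{L²(0,T;H¹₀)}`. -/
theorem time_translate_estimate
    {V H : Type*} [NormedAddCommGroup V] [NormedSpace ℝ V]
    [NormedAddCommGroup H] [InnerProductSpace ℝ H]
    (i : V →L[ℝ] H)
    (T τ : ℝ) (hT : 0 < T) (hτ0 : 0 < τ) (hτT : τ < T)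
    (u : ℝ → V) (u' : ℝ → V →L[ℝ] ℝ)
    -- absolute continuity with derivative `u'` in the dual of `V`:
    (hAC : ∀ t, 0 ≤ t → t + τ ≤ T →
      ‖i (u (t + τ)) - i (u t)‖ ^ 2 = ∫ s in t..(t + τ), u' s (u (t + τ) - u t))
    -- `∂_t u ∈ L²(0,T;V')` and `u ∈ L²(0,T;V)`:
    (hu'2 : IntervalIntegrable (fun s => ‖u' s‖ ^ 2) volume 0 T)
    (hu2 : IntervalIntegrable (fun s => ‖u s‖ ^ 2) volume 0 T)
    (huH2 : IntervalIntegrable (fun t => ‖i (u (t + τ)) - i (u t)‖ ^ 2) volume 0 (T - τ)) :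
    ∫ t in (0 : ℝ)..(T - τ), ‖i (u (t + τ)) - i (u t)‖ ^ 2
      ≤ τ * (2 * Real.sqrt (∫ s in (0 : ℝ)..T, ‖u' s‖ ^ 2) *
        Real.sqrt (∫ s in (0 : ℝ)..T, ‖u s‖ ^ 2)) :=
  time_translate_estimate_general i T τ hτ0 hτT u u' hAC hu'2 hu2
end
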